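/- Let Ω ⊆ ℝⁿ be open, f : Ω×ℝ → ℝ continuous, and g : ℝ → ℝ continuous satisfying (g₀). Set h(x, s) = e^{3G(Φ_g⁻¹(s))} f(x, Φ_g⁻¹(s)). Then u ∈ C²(Ω) satisfies Δ_∞u + g(u)|Du|⁴ + f(x, u) = 0 at every point of Ω if and only if v = Φ_g ∘ u satisfies Δ_∞v + h(x, v) = 0 at every point of Ω. -/

import Mathlib

open Real Filter Set

/-- Gradient of `u` at `x` (vector of partial derivatives). -/
noncomputable def vgrad {n : ℕ} (u : (Fin n → ℝ) → ℝ) (x : Fin n → ℝ) : Fin n → ℝ :=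
  fun i => fderiv ℝ u x (Pi.single i 1)

/-- Hessian matrix of `u` at `x`. -/
noncomputable def vhess {n : ℕ} (u : (Fin n → ℝ) → ℝ) (x : Fin n → ℝ) :
    Matrix (Fin n) (Fin n) ℝ :=
  Matrix.of fun i j => fderiv ℝ (fun y => fderiv ℝ u y (Pi.single j 1)) x (Pi.single i 1)

noncomputable def Gg (g : ℝ → ℝ) (s : ℝ) : ℝ := ∫ τ in (0:ℝ)..s, g τ

noncomputable def Phig (g : ℝ → ℝ) (t : ℝ) : ℝ := ∫ s in (0:ℝ)..t, Real.exp (Gg g s)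

/-- Condition `(g₀)`. -/
def g0cond (g : ℝ → ℝ) : Prop :=
  ∃ s₀ : ℝ, 0 ≤ s₀ ∧ (∀ s, s₀ ≤ s → 0 ≤ g s) ∧ (∀ s, s ≤ -s₀ → g s ≤ 0)

/-- Infinity-Laplacian `Δ_∞ u = ⟨D²u Du, Du⟩`. -/
noncomputable def infLap {n : ℕ} (u : (Fin n → ℝ) → ℝ) (x : Fin n → ℝ) : ℝ :=
  dotProduct (Matrix.mulVec (vhess u x) (vgrad u x)) (vgrad u x)

/-- Squared Euclidean norm `|p|²` of a vector. -/
noncomputable def normSq {n : ℕ} (p : Fin n → ℝ) : ℝ := ∑ i, p i ^ 2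

/-!
For `φ ∈ C²(ℝ)` the chain rule gives `Δ_∞(φ ∘ u) = φ'(u)³ Δ_∞u + φ'(u)² φ''(u) |Du|⁴`.
For `φ = Φ_g` we have `φ' = e^G` and `φ'' = g e^G`, so
`Δ_∞(Φ_g ∘ u) = e^{3G(u)} (Δ_∞u + g(u)|Du|⁴)`. Since `Φ_g⁻¹ ∘ v = u` and `e^{3G(u)} > 0`,
the two equations differ by this positive factor.
-/

open Matrix Topology

theorem normSq_eq_dotProduct {n : ℕ} (p : Fin n → ℝ) : normSq p = p ⬝ᵥ p := by
  simp only [normSq, dotProduct, sq]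

theorem quadForm_smul_add_vecMulVec {n : ℕ} (H : Matrix (Fin n) (Fin n) ℝ) (p : Fin n → ℝ)
    (a c : ℝ) :
    (a • H + c • vecMulVec p p) *ᵥ (a • p) ⬝ᵥ (a • p)
      = a ^ 3 * (H *ᵥ p ⬝ᵥ p) + a ^ 2 * c * (p ⬝ᵥ p) ^ 2 := by
  simp only [add_mulVec, smul_mulVec, mulVec_smul, vecMulVec_mulVec, op_smul_eq_smul,
    add_dotProduct, smul_dotProduct, dotProduct_smul, smul_eq_mul]
  ring

theorem vgrad_comp {n : ℕ} {φ : ℝ → ℝ} {a : ℝ} {u : (Fin n → ℝ) → ℝ} {x : Fin n → ℝ}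
    (hφ : HasDerivAt φ a (u x)) (hu : DifferentiableAt ℝ u x) :
    vgrad (φ ∘ u) x = a • vgrad u x := by
  ext i
  simp [vgrad, (hφ.comp_hasFDerivAt x hu.hasFDerivAt).fderiv]

theorem vhess_comp {n : ℕ} {φ φ' : ℝ → ℝ} {φ'' : ℝ} {u : (Fin n → ℝ) → ℝ} {x : Fin n → ℝ}
    (hφ : ∀ t, HasDerivAt φ (φ' t) t) (hφ' : HasDerivAt φ' φ'' (u x))
    (hu : ContDiffAt ℝ 2 u x) :
    vhess (φ ∘ u) x = φ' (u x) • vhess u x + φ'' • vecMulVec (vgrad u x) (vgrad u x) := by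
  have hud : ∀ᶠ y in 𝓝 x, DifferentiableAt ℝ u y :=
    (hu.eventually (by simp)).mono fun y hy => hy.differentiableAt (by norm_num)
  have hDu : DifferentiableAt ℝ (fderiv ℝ u) x :=
    (hu.fderiv_right (m := 1) (by norm_num)).differentiableAt one_ne_zero
  ext i j
  have hpartial : (fun y => fderiv ℝ (φ ∘ u) y (Pi.single j 1)) =ᶠ[𝓝 x]
      fun y => φ' (u y) * fderiv ℝ u y (Pi.single j 1) := by
    filter_upwards [hud] with y hy
    simp [((hφ (u y)).comp_hasFDerivAt y hy.hasFDerivAt).fderiv]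
  have hDuj : HasFDerivAt (fun y => fderiv ℝ u y (Pi.single j 1))
      ((ContinuousLinearMap.apply ℝ ℝ (Pi.single j 1 : Fin n → ℝ)).comp
        (fderiv ℝ (fderiv ℝ u) x)) x :=
    (ContinuousLinearMap.apply ℝ ℝ (Pi.single j 1 : Fin n → ℝ)).hasFDerivAt.comp x
      hDu.hasFDerivAt
  have hprod := (hφ'.comp_hasFDerivAt x hud.self_of_nhds.hasFDerivAt).mul hDuj
  simp only [vhess, Matrix.add_apply, Matrix.smul_apply, of_apply, hpartial.fderiv_eq,
    hDuj.fderiv, HasFDerivAt.fderiv (f := fun y => φ' (u y) * fderiv ℝ u y (Pi.single j 1)) hprod]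
  simp only [Function.comp_apply, _root_.add_apply,
    _root_.smul_apply, ContinuousLinearMap.comp_apply,
    ContinuousLinearMap.apply_apply, smul_eq_mul, vecMulVec, vgrad, of_apply]
  ring

theorem infLap_comp {n : ℕ} {φ φ' : ℝ → ℝ} {φ'' : ℝ} {u : (Fin n → ℝ) → ℝ} {x : Fin n → ℝ}
    (hφ : ∀ t, HasDerivAt φ (φ' t) t) (hφ' : HasDerivAt φ' φ'' (u x))
    (hu : ContDiffAt ℝ 2 u x) :
    infLap (φ ∘ u) x
      = φ' (u x) ^ 3 * infLap u x + φ' (u x) ^ 2 * φ'' * normSq (vgrad u x) ^ 2 := by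
  rw [infLap, vhess_comp hφ hφ' hu, vgrad_comp (hφ _) (hu.differentiableAt (by norm_num)),
    quadForm_smul_add_vecMulVec, infLap, normSq_eq_dotProduct]

theorem hasDerivAt_Gg {g : ℝ → ℝ} (hg : Continuous g) (s : ℝ) : HasDerivAt (Gg g) (g s) s :=
  intervalIntegral.integral_hasDerivAt_right (hg.intervalIntegrable _ _)
    (hg.stronglyMeasurableAtFilter _ _) hg.continuousAt

theorem hasDerivAt_Phig {g : ℝ → ℝ} (hg : Continuous g) (t : ℝ) :
    HasDerivAt (Phig g) (exp (Gg g t)) t :=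
  have hE : Continuous fun s => exp (Gg g s) :=
    (continuous_iff_continuousAt.2 fun s => (hasDerivAt_Gg hg s).continuousAt).rexp
  intervalIntegral.integral_hasDerivAt_right (hE.intervalIntegrable _ _)
    (hE.stronglyMeasurableAtFilter _ _) hE.continuousAt

theorem infLap_Phig_comp {n : ℕ} {g : ℝ → ℝ} (hg : Continuous g) {u : (Fin n → ℝ) → ℝ}
    {x : Fin n → ℝ} (hu : ContDiffAt ℝ 2 u x) :
    infLap (Phig g ∘ u) x
      = exp (3 * Gg g (u x)) * (infLap u x + g (u x) * normSq (vgrad u x) ^ 2) := by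
  rw [infLap_comp (hasDerivAt_Phig hg) (hasDerivAt_Gg hg (u x)).exp hu]
  have hexp : exp (3 * Gg g (u x)) = exp (Gg g (u x)) ^ 3 := by
    rw [← exp_nat_mul]; norm_num
  rw [hexp]
  ring

theorem stmt9_general {n : ℕ} (Ω : Set (Fin n → ℝ)) (hΩ : IsOpen Ω)
    (f : (Fin n → ℝ) → ℝ → ℝ)
    (g : ℝ → ℝ) (hg : Continuous g)
    (Φinv : ℝ → ℝ) (hleft : ∀ t : ℝ, Φinv (Phig g t) = t)
    (u : (Fin n → ℝ) → ℝ) (hu : ContDiffOn ℝ 2 u Ω) :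
    (∀ x ∈ Ω, infLap u x + g (u x) * (normSq (vgrad u x)) ^ 2 + f x (u x) = 0) ↔
    (∀ x ∈ Ω, infLap (Phig g ∘ u) x
        + Real.exp (3 * Gg g (Φinv ((Phig g ∘ u) x))) * f x (Φinv ((Phig g ∘ u) x)) = 0) := by
  refine forall₂_congr fun x hx => ?_
  rw [infLap_Phig_comp hg (hu.contDiffAt (hΩ.mem_nhds hx)), Function.comp_apply, hleft, ← mul_add]
  exact (mul_eq_zero_iff_left (exp_pos _).ne').symm

/-- u ∈ C²(Ω) solves Δ_∞u + g(u)|Du|⁴ + f(x,u) = 0 iff v = Φ_g ∘ u solves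
Δ_∞v + h(x,v) = 0 with h(x,s) = e^{3G(Φ_g⁻¹(s))} f(x, Φ_g⁻¹(s)). -/
theorem stmt9 {n : ℕ} (Ω : Set (Fin n → ℝ)) (hΩ : IsOpen Ω)
    (f : (Fin n → ℝ) → ℝ → ℝ)
    (hf : ContinuousOn (fun q : (Fin n → ℝ) × ℝ => f q.1 q.2) (Ω ×ˢ Set.univ))
    (g : ℝ → ℝ) (hg : Continuous g) (hg0 : g0cond g)
    (Φinv : ℝ → ℝ) (hleft : ∀ t : ℝ, Φinv (Phig g t) = t)
    (hright : ∀ s : ℝ, Phig g (Φinv s) = s)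
    (u : (Fin n → ℝ) → ℝ) (hu : ContDiffOn ℝ 2 u Ω) :
    (∀ x ∈ Ω, infLap u x + g (u x) * (normSq (vgrad u x)) ^ 2 + f x (u x) = 0) ↔
    (∀ x ∈ Ω, infLap (Phig g ∘ u) x
        + Real.exp (3 * Gg g (Φinv ((Phig g ∘ u) x))) * f x (Φinv ((Phig g ∘ u) x)) = 0) :=
  stmt9_general Ω hΩ f g hg Φinv hleft u hu
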